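/- arXiv:2305.11843 — 2 statements merged into one kernel-verified Lean document; each statement's English description precedes it below -/
import Mathlib

section
/- Let (K, r_n) be a pre-extender on an n-maniplex K. Then ♥(K, r_n), the union of all r_n-friendly subsets of Aut(K), is itself r_n-friendly (hence it is the unique greatest r_n-friendly set), it is a subgroup of Aut(K), and it contains Aut(K_{r_n}) = {τ ∈ Aut(K) : r_n(Φτ) = (r_n Φ)τ for every flag Φ}. In particular, if r_n = Id then ♥(K, r_n) = Aut(K). -/
/-! ## Basic notions: maniplexes, premaniplexes, orbits, automorphisms -/

/-- One monodromy step using an index satisfying `P`. -/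
def StepOn {K : Type*} {n : ℕ} (r : Fin n → K → K) (P : Fin n → Prop) (x y : K) : Prop :=
  ∃ i, P i ∧ r i x = y

/-- `y` is reachable from `x` by monodromies whose index satisfies `P`;
this is the orbit relation of the subgroup generated by those monodromies. -/
def ReachOn {K : Type*} {n : ℕ} (r : Fin n → K → K) (P : Fin n → Prop) : K → K → Prop :=
  Relation.ReflTransGen (StepOn r P)

/-- Orbit relation of the full monodromy group. -/
def ConnRel {K : Type*} {n : ℕ} (r : Fin n → K → K) : K → K → Prop :=
  ReachOn r fun _ => True

/-- Same facet: orbit relation of `r_0, …, r_{n-2}`. -/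
def FacetRel {K : Type*} {n : ℕ} (r : Fin n → K → K) : K → K → Prop :=
  ReachOn r fun i => (i : ℕ) + 1 < n

/-- Same vertex: orbit relation of `r_1, …, r_{n-1}`. -/
def VertexRel {K : Type*} {n : ℕ} (r : Fin n → K → K) : K → K → Prop :=
  ReachOn r fun i => 1 ≤ (i : ℕ)

/-- An `n`-maniplex on the flag set `K`, given by its monodromies `r_0, …, r_{n-1}`. -/
structure IsManiplex {K : Type*} (n : ℕ) (r : Fin n → K → K) : Prop where
  nonempty : Nonempty K
  invol : ∀ i, Function.Involutive (r i)
  fixfree : ∀ (i : Fin n) (x : K), r i x ≠ x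
  fixfree₂ : ∀ (i j : Fin n), i ≠ j → ∀ x : K, r i (r j x) ≠ x
  sq : ∀ (i j : Fin n), 2 ≤ |(i : ℤ) - (j : ℤ)| → ∀ x : K, r i (r j (r i (r j x))) = x
  conn : ∀ x y : K, ConnRel r x y

/-- A premaniplex of rank `n` (fixed points allowed, connectivity not required). -/
structure IsPremaniplex {K : Type*} (n : ℕ) (r : Fin n → K → K) : Prop where
  invol : ∀ i, Function.Involutive (r i)
  sq : ∀ (i j : Fin n), 2 ≤ |(i : ℤ) - (j : ℤ)| → ∀ x : K, r i (r j (r i (r j x))) = x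

/-- The automorphism group: permutations of the flags commuting with every monodromy. -/
def autGroup {K : Type*} {n : ℕ} (r : Fin n → K → K) : Subgroup (Equiv.Perm K) where
  carrier := {τ : Equiv.Perm K | ∀ (i : Fin n) (x : K), τ (r i x) = r i (τ x)}
  one_mem' := by intro i x; rfl
  mul_mem' := by
    intro a b ha hb i x
    simp only [Set.mem_setOf_eq] at ha hb ⊢
    simp only [Equiv.Perm.mul_apply]
    rw [hb i x, ha i (b x)]
  inv_mem' := by
    intro a ha i x
    simp only [Set.mem_setOf_eq] at ha ⊢
    have h := ha i (a⁻¹ x)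
    rw [show a (a⁻¹ x) = x from Equiv.apply_symm_apply a x] at h
    rw [← h, show a⁻¹ (a (r i (a⁻¹ x))) = r i (a⁻¹ x) from Equiv.symm_apply_apply a _]

/-- A pre-extender: an involutory permutation `rn` of the flags of the `n`-maniplex `(K, r)`
commuting with `r_0, …, r_{n-2}`. -/
structure IsPreExtender {K : Type*} {n : ℕ} (r : Fin n → K → K) (rn : K → K) : Prop where
  maniplex : IsManiplex n r
  rn_invol : Function.Involutive rn
  rn_comm : ∀ i : Fin n, (i : ℕ) + 1 < n → ∀ x : K, rn (r i x) = r i (rn x)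

/-- A Cayley extender `(K, rn, ξ)` with voltage group `G`; the voltage is encoded as a
function on flags which is constant on facets. -/
structure IsCayleyExtender {K : Type*} {G : Type*} [Group G] {n : ℕ}
    (r : Fin n → K → K) (rn : K → K) (ξ : K → G) : Prop where
  maniplex : IsManiplex n r
  rn_invol : Function.Involutive rn
  rn_comm : ∀ i : Fin n, (i : ℕ) + 1 < n → ∀ x : K, rn (r i x) = r i (rn x)
  const : ∀ Φ Ψ : K, FacetRel r Φ Ψ → ξ Φ = ξ Ψ
  voltage_inv : ∀ Φ : K, ξ (rn Φ) = (ξ Φ)⁻¹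

/-- A Cayley coextender `(K, r_{-1}, ξ')` with voltage group `G'`; the voltage is encoded as
a function on flags which is constant on vertices. -/
structure IsCayleyCoextender {K : Type*} {G' : Type*} [Group G'] {n : ℕ}
    (r : Fin n → K → K) (rm : K → K) (ξ' : K → G') : Prop where
  maniplex : IsManiplex n r
  rm_invol : Function.Involutive rm
  rm_comm : ∀ i : Fin n, 1 ≤ (i : ℕ) → ∀ x : K, rm (r i x) = r i (rm x)
  const : ∀ Φ Ψ : K, VertexRel r Φ Ψ → ξ' Φ = ξ' Ψ
  voltage_inv : ∀ Φ : K, ξ' (rm Φ) = (ξ' Φ)⁻¹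

/-- Monodromies of the derived graph `K_{rn}^ξ` on flag set `K × G`. -/
def derivedMono {K : Type*} {G : Type*} [Group G] {n : ℕ}
    (r : Fin n → K → K) (rn : K → K) (ξ : K → G) : Fin (n + 1) → K × G → K × G :=
  fun i p =>
    if h : (i : ℕ) < n then (r ⟨(i : ℕ), h⟩ p.1, p.2) else (rn p.1, ξ p.1 * p.2)

/-- Monodromies of the derived graph `K_{r_{-1}}^{ξ'}` of a coextender, on flag set `K × G'`. -/
def coderivedMono {K : Type*} {G' : Type*} [Group G'] {n : ℕ}
    (r : Fin n → K → K) (rm : K → K) (ξ' : K → G') : Fin (n + 1) → K × G' → K × G' :=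
  fun i p =>
    if _h : (i : ℕ) = 0 then (rm p.1, ξ' p.1 * p.2)
    else (r ⟨(i : ℕ) - 1, by have := i.isLt; omega⟩ p.1, p.2)

/-- Monodromies of the flat amalgamation, on flag set `K × G' × G`. -/
def amalgMono {K : Type*} {G' : Type*} {G : Type*} [Group G'] [Group G] {n : ℕ}
    (r : Fin n → K → K) (rm : K → K) (rn : K → K) (ξ' : K → G') (ξ : K → G) :
    Fin (n + 2) → K × G' × G → K × G' × G :=
  fun i p =>
    if _h0 : (i : ℕ) = 0 then (rm p.1, ξ' p.1 * p.2.1, p.2.2)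
    else if _hn : (i : ℕ) = n + 1 then (rn p.1, p.2.1, ξ p.1 * p.2.2)
    else (r ⟨(i : ℕ) - 1, by have := i.isLt; omega⟩ p.1, p.2.1, p.2.2)

/-- The path intersection property characterizing flag graphs of polytopes. -/
def IsPolytopal {K : Type*} {m : ℕ} (t : Fin m → K → K) : Prop :=
  ∀ (x y : K) (k l : ℕ), k ≤ l → l < m →
    ReachOn t (fun i => k ≤ (i : ℕ)) x y →
    ReachOn t (fun i => (i : ℕ) ≤ l) x y →
    ReachOn t (fun i => k ≤ (i : ℕ) ∧ (i : ℕ) ≤ l) x y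

/-- `S` is an `(rn, rn')`-friendly set: for every flag `Φ` and `τ ∈ S` there is `σ ∈ S`
with `rn'(Φτ) = (rn Φ)σ` (automorphisms act on the right, i.e. by function application). -/
def FriendlySet {K : Type*} (rn rn' : K → K) (S : Set (Equiv.Perm K)) : Prop :=
  ∀ Φ : K, ∀ τ ∈ S, ∃ σ ∈ S, rn' (τ Φ) = σ (rn Φ)

/-- `♥(K, rn)`: the union of all `rn`-friendly subsets of `Aut(K)`. -/
def heartSet {K : Type*} {n : ℕ} (r : Fin n → K → K) (rn : K → K) : Set (Equiv.Perm K) :=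
  ⋃₀ {S : Set (Equiv.Perm K) | S ⊆ ↑(autGroup r) ∧ FriendlySet rn rn S}

/-- Relations of the universal voltage group `G(K, rn)`: one generator per flag, generators of
flags in the same facet are identified, and `α_F · α_{rn F} = 1`. -/
def UnivRels {K : Type*} {n : ℕ} (r : Fin n → K → K) (rn : K → K) : Set (FreeGroup K) :=
  {w | ∃ Φ Ψ : K, FacetRel r Φ Ψ ∧ w = FreeGroup.of Φ * (FreeGroup.of Ψ)⁻¹} ∪
    {w | ∃ Φ : K, w = FreeGroup.of Φ * FreeGroup.of (rn Φ)}

/-- The universal voltage assignment `Φ ↦ α_{F_Φ}` into `G(K, rn)`. -/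
def univVoltage {K : Type*} {n : ℕ} (r : Fin n → K → K) (rn : K → K) :
    K → PresentedGroup (UnivRels r rn) :=
  fun Φ => PresentedGroup.of Φ

/-- `♥(K, r_n)`, the union of all `r_n`-friendly subsets of `Aut(K)`, is
itself `r_n`-friendly (hence the unique greatest `r_n`-friendly set), is a subgroup of
`Aut(K)` containing `Aut(K_{r_n})`, and equals `Aut(K)` when `r_n = id`. -/
theorem statement15 {K : Type*} {n : ℕ} (r : Fin n → K → K) (rn : K → K)
    (hpre : IsPreExtender r rn) :
    FriendlySet rn rn (heartSet r rn) ∧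
      (∀ S : Set (Equiv.Perm K), S ⊆ ↑(autGroup r) → FriendlySet rn rn S →
        S ⊆ heartSet r rn) ∧
      (∃ Hs : Subgroup (Equiv.Perm K),
        (Hs : Set (Equiv.Perm K)) = heartSet r rn ∧ Hs ≤ autGroup r) ∧
      {τ : Equiv.Perm K | τ ∈ autGroup r ∧ ∀ Φ : K, rn (τ Φ) = τ (rn Φ)} ⊆ heartSet r rn ∧
      (rn = id → heartSet r rn = ↑(autGroup r)) := by
  have hsub : heartSet r rn ⊆ ↑(autGroup r) := by
    rintro τ ⟨S, ⟨hS, _⟩, hτ⟩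
    exact hS hτ
  have hfriend : FriendlySet rn rn (heartSet r rn) := by
    rintro Φ τ ⟨S, ⟨hS, hF⟩, hτ⟩
    obtain ⟨σ, hσ, h⟩ := hF Φ τ hτ
    exact ⟨σ, ⟨S, ⟨hS, hF⟩, hσ⟩, h⟩
  have hmax : ∀ S : Set (Equiv.Perm K), S ⊆ ↑(autGroup r) → FriendlySet rn rn S →
      S ⊆ heartSet r rn := fun S h1 h2 x hx => ⟨S, ⟨h1, h2⟩, hx⟩
  have h1 : (1 : Equiv.Perm K) ∈ heartSet r rn := by
    refine hmax {1} ?_ ?_ rfl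
    · intro x hx
      rw [Set.mem_singleton_iff] at hx
      rw [hx]
      exact (autGroup r).one_mem
    · intro Φ τ hτ
      rw [Set.mem_singleton_iff] at hτ
      subst hτ
      exact ⟨1, rfl, rfl⟩
  have hm : ∀ a b : Equiv.Perm K, a ∈ heartSet r rn → b ∈ heartSet r rn →
      a * b ∈ heartSet r rn := by
    rintro a b ⟨S, ⟨hS, hSF⟩, ha⟩ ⟨T, ⟨hT, hTF⟩, hb⟩
    refine hmax (Set.image2 (· * ·) S T) ?_ ?_ ⟨a, ha, b, hb, rfl⟩
    · rintro x ⟨s, hs, t, ht, rfl⟩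
      exact (autGroup r).mul_mem (hS hs) (hT ht)
    · rintro Φ τ ⟨s, hs, t, ht, rfl⟩
      obtain ⟨σ', hσ', h'⟩ := hTF Φ t ht
      obtain ⟨σ, hσ, h⟩ := hSF (t Φ) s hs
      refine ⟨σ * σ', ⟨σ, hσ, σ', hσ', rfl⟩, ?_⟩
      simp only [Equiv.Perm.mul_apply]
      rw [h, h']
  have hi : ∀ a : Equiv.Perm K, a ∈ heartSet r rn → a⁻¹ ∈ heartSet r rn := by
    rintro a ⟨S, ⟨hS, hSF⟩, ha⟩
    refine hmax S⁻¹ ?_ ?_ (by rw [Set.mem_inv, inv_inv]; exact ha)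
    · intro x hx
      rw [Set.mem_inv] at hx
      have := (autGroup r).inv_mem (hS hx)
      rwa [inv_inv] at this
    · intro Φ τ hτ
      rw [Set.mem_inv] at hτ
      obtain ⟨σ, hσ, h⟩ := hSF (τ Φ) τ⁻¹ hτ
      rw [show τ⁻¹ (τ Φ) = Φ from Equiv.symm_apply_apply τ Φ] at h
      refine ⟨σ⁻¹, by rw [Set.mem_inv, inv_inv]; exact hσ, ?_⟩
      rw [h, show σ⁻¹ (σ (rn (τ Φ))) = rn (τ Φ) from Equiv.symm_apply_apply σ _]
  refine ⟨hfriend, hmax, ?_, ?_, ?_⟩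
  · exact ⟨{ carrier := heartSet r rn
             one_mem' := h1
             mul_mem' := fun ha hb => hm _ _ ha hb
             inv_mem' := fun ha => hi _ ha }, rfl, hsub⟩
  · refine hmax _ (fun τ hτ => hτ.1) ?_
    rintro Φ τ ⟨hτ1, hτ2⟩
    exact ⟨τ, ⟨hτ1, hτ2⟩, hτ2 Φ⟩
  · intro h
    subst h
    refine Set.Subset.antisymm hsub (hmax _ le_rfl ?_)
    intro Φ τ hτ
    exact ⟨τ, hτ, rfl⟩
end

section
/- Let (K, r_n, ξ) and (K, r_n′, ξ′) be Cayley extenders on the same n-maniplex K, with voltage groups G and G′ respectively, and let φ : K × G → K × G′ be a homomorphism of derived graphs (a map intertwining the monodromies s_0, …, s_n of K_{r_n}^ξ with those of K_{r_n′}^{ξ′}). For each γ ∈ G define φ_γ : K → K by letting Φφ_γ be the first coordinate of (Φ, γ)φ. Then for every flag Φ of K and every γ ∈ G, r_n′(Φφ_γ) = (r_n Φ)φ_{ξ(F_Φ)·γ}; in particular the set S_φ = {φ_γ : γ ∈ G} satisfies the (r_n, r_n′)-friendliness condition: for every flag Φ and every f ∈ S_φ there exists f′ ∈ S_φ with r_n′(Φf)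 = (r_n Φ)f′. -/
/-- For a homomorphism `φ` between derived graphs of Cayley extenders, the
induced maps `φ_γ` satisfy `r_n'(Φφ_γ) = (r_n Φ)φ_{ξ(F_Φ)γ}`; in particular the set
`S_φ = {φ_γ : γ ∈ G}` satisfies the `(r_n, r_n')`-friendliness condition. -/
theorem statement16 {K G G' : Type*} [Group G] [Group G'] {n : ℕ}
    (r : Fin n → K → K) (rn rn' : K → K) (ξ : K → G) (ξ' : K → G')
    (hext : IsCayleyExtender r rn ξ) (hext' : IsCayleyExtender r rn' ξ')
    (φ : K × G → K × G')
    (hφ : ∀ (i : Fin (n + 1)) (x : K × G),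
      φ (derivedMono r rn ξ i x) = derivedMono r rn' ξ' i (φ x)) :
    (∀ (Φ : K) (γ : G), rn' ((φ (Φ, γ)).1) = (φ (rn Φ, ξ Φ * γ)).1) ∧
      ∀ Φ : K, ∀ f ∈ {f : K → K | ∃ γ : G, ∀ Ψ : K, f Ψ = (φ (Ψ, γ)).1},
        ∃ f' ∈ {f : K → K | ∃ γ : G, ∀ Ψ : K, f Ψ = (φ (Ψ, γ)).1},
          rn' (f Φ) = f' (rn Φ) := by
  have key : ∀ (Φ : K) (γ : G), rn' ((φ (Φ, γ)).1) = (φ (rn Φ, ξ Φ * γ)).1 := by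
    intro Φ γ
    have h := hφ ⟨n, Nat.lt_succ_self n⟩ (Φ, γ)
    simp only [derivedMono, lt_irrefl, dif_neg (lt_irrefl n)] at h
    exact (congrArg Prod.fst h).symm
  refine ⟨key, ?_⟩
  rintro Φ f ⟨γ, hf⟩
  exact ⟨fun Ψ => (φ (Ψ, ξ Φ * γ)).1, ⟨ξ Φ * γ, fun _ => rfl⟩, by rw [hf]; exact key Φ γ⟩
end
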